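/- arXiv:2511.18390 — 3 statements merged into one kernel-verified Lean document; each statement's English description precedes it below -/
import Mathlib

section
/- Let g : ℝ^d → ℝ be convex and continuous, f : ℝ^d → ℝ be μ-strongly convex (μ > 0) and continuous. Let x* be the unique minimizer of f over the set of global minimizers of g. For each λ > 0 let x_λ* be the unique minimizer of g + λf. If x_λ* converges to some point as λ → 0⁺, then that limit equals x*, i.e., ‖x* − x_λ*‖ → 0 as λ → 0⁺. -/
open Filter Topology

/-! Comparing a minimizer `x` of `g + l • f` with any `y ∈ argmin g` gives `f x ≤ f y`, while
comparing it with any `z` gives `g x ≤ g z + l (f z - f x)`. Letting `l → 0⁺` along a convergent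
family of such minimizers, the limit `p` minimizes `g` and then `f` on `argmin g`, so it is the
bilevel solution. -/

theorem le_of_isPenalizedMin_of_isMin {X : Type*} {f g : X → ℝ} {l : ℝ} (hl : 0 < l) {x y : X}
    (hx : ∀ z, g x + l * f x ≤ g z + l * f z) (hy : ∀ z, g y ≤ g z) : f x ≤ f y := by
  have hxy := hx y
  have hyx := hy x
  exact le_of_mul_le_mul_left (by linarith) hl

section PenalizedMinimizer

variable {X : Type*} [TopologicalSpace X] {f g : X → ℝ} {x : ℝ → X} {p : X}
  (hx : ∀ l : ℝ, 0 < l → ∀ z, g (x l) + l * f (x l) ≤ g z + l * f z)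
  (hconv : Tendsto x (𝓝[>] 0) (𝓝 p))
include hx hconv

theorem le_of_tendsto_penalizedMin (hfc : ContinuousAt f p) (hgc : ContinuousAt g p) (z : X) :
    g p ≤ g z := by
  have hfx : Tendsto (fun l => f (x l)) (𝓝[>] 0) (𝓝 (f p)) := hfc.tendsto.comp hconv
  have hgx : Tendsto (fun l => g (x l)) (𝓝[>] 0) (𝓝 (g p)) := hgc.tendsto.comp hconv
  have hbound : ∀ᶠ l in 𝓝[>] (0 : ℝ), g (x l) ≤ g z + l * (f z - f (x l)) := by
    filter_upwards [self_mem_nhdsWithin] with l hl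
    linarith [hx l hl z]
  have hbound_lim : Tendsto (fun l : ℝ => g z + l * (f z - f (x l))) (𝓝[>] 0) (𝓝 (g z)) := by
    have hl : Tendsto (fun l : ℝ => l) (𝓝[>] 0) (𝓝 0) := nhdsWithin_le_nhds
    simpa using tendsto_const_nhds.add (hl.mul (tendsto_const_nhds.sub hfx))
  exact le_of_tendsto_of_tendsto hgx hbound_lim hbound

theorem le_of_tendsto_penalizedMin_of_isMin (hfc : ContinuousAt f p) {y : X}
    (hy : ∀ z, g y ≤ g z) : f p ≤ f y := by
  refine le_of_tendsto (hfc.tendsto.comp hconv) ?_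
  filter_upwards [self_mem_nhdsWithin] with l hl
  exact le_of_isPenalizedMin_of_isMin hl (hx l hl) hy

end PenalizedMinimizer

theorem reg_minimizer_tendsto_general {d : ℕ} (f g : EuclideanSpace ℝ (Fin d) → ℝ)
    (hgc : Continuous g)
    (hfc : Continuous f)
    (xstar : EuclideanSpace ℝ (Fin d))
    (hxstar_uniq : ∀ y, (∀ z, g y ≤ g z) → (∀ y', (∀ z, g y' ≤ g z) → f y ≤ f y') → y = xstar)
    (xl : ℝ → EuclideanSpace ℝ (Fin d))
    (hxl : ∀ l : ℝ, 0 < l → ∀ y, g (xl l) + l * f (xl l) ≤ g y + l * f y)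
    (p : EuclideanSpace ℝ (Fin d))
    (hconv : Tendsto xl (𝓝[>] (0 : ℝ)) (𝓝 p)) :
    p = xstar ∧ Tendsto (fun l => ‖xstar - xl l‖) (𝓝[>] (0 : ℝ)) (𝓝 0) := by
  have hp_min_g : ∀ z, g p ≤ g z :=
    le_of_tendsto_penalizedMin hxl hconv hfc.continuousAt hgc.continuousAt
  have hp_min_f : ∀ y, (∀ z, g y ≤ g z) → f p ≤ f y := fun y hy =>
    le_of_tendsto_penalizedMin_of_isMin hxl hconv hfc.continuousAt hy
  have hp : p = xstar := hxstar_uniq p hp_min_g hp_min_f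
  subst hp
  refine ⟨rfl, ?_⟩
  simpa only [norm_sub_rev] using tendsto_iff_norm_sub_tendsto_zero.mp hconv

/-- Convergence of regularized minimizers to the bilevel solution as λ → 0⁺. -/
theorem reg_minimizer_tendsto {d : ℕ} (f g : EuclideanSpace ℝ (Fin d) → ℝ) (μ : ℝ)
    (hμ : 0 < μ)
    (hg : ConvexOn ℝ Set.univ g) (hgc : Continuous g)
    (hf : ConvexOn ℝ Set.univ (fun x => f x - μ / 2 * ‖x‖ ^ 2)) (hfc : Continuous f)
    (xstar : EuclideanSpace ℝ (Fin d))
    (hxstar_g : ∀ y, g xstar ≤ g y)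
    (hxstar_f : ∀ y, (∀ z, g y ≤ g z) → f xstar ≤ f y)
    (hxstar_uniq : ∀ y, (∀ z, g y ≤ g z) → (∀ y', (∀ z, g y' ≤ g z) → f y ≤ f y') → y = xstar)
    (xl : ℝ → EuclideanSpace ℝ (Fin d))
    (hxl : ∀ l : ℝ, 0 < l → ∀ y, g (xl l) + l * f (xl l) ≤ g y + l * f y)
    (p : EuclideanSpace ℝ (Fin d))
    (hconv : Tendsto xl (𝓝[>] (0 : ℝ)) (𝓝 p)) :
    p = xstar ∧ Tendsto (fun l => ‖xstar - xl l‖) (𝓝[>] (0 : ℝ)) (𝓝 0) :=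
  reg_minimizer_tendsto_general f g hgc hfc xstar hxstar_uniq xl hxl p hconv
end

section
/- If a continuously differentiable function q : ℝ^d → ℝ satisfies the PL inequality with constant μ > 0 and attains its minimum at a unique point x*, then q has quadratic growth: q(x) − q(x*) ≥ (μ/2)‖x − x*‖² for all x. -/
open Set Filter Topology

lemma my_ekeland {X : Type*} [MetricSpace X] [CompleteSpace X]
    (f : X → ℝ) (hf : Continuous f) (hf0 : ∀ z, 0 ≤ f z)
    (δ : ℝ) (hδ : 0 < δ) (x : X) :
    ∃ y, dist y x ≤ f x / δ ∧ f y ≤ f x ∧ ∀ z, f y - δ * dist z y ≤ f z := by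
  set S : X → Set X := fun u => {z | f z + δ * dist z u ≤ f u} with hS
  have hmem : ∀ u, u ∈ S u := by intro u; simp [hS]
  have hne : ∀ u, (f '' S u).Nonempty := fun u => ⟨f u, u, hmem u, rfl⟩
  have hbdd : ∀ u, BddBelow (f '' S u) := by
    intro u; exact ⟨0, by rintro _ ⟨z, _, rfl⟩; exact hf0 z⟩
  have key : ∀ (n : ℕ) (u : X), ∃ z, z ∈ S u ∧ f z < sInf (f '' S u) + (1/2)^n := by
    intro n u
    have hpos : (0:ℝ) < (1/2)^n := by positivity
    have : sInf (f '' S u) < sInf (f '' S u) + (1/2)^n := by linarith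
    obtain ⟨_, ⟨z, hz, rfl⟩, hlt⟩ := (csInf_lt_iff (hbdd u) (hne u)).mp this
    exact ⟨z, hz, hlt⟩
  choose next hnext1 hnext2 using key
  set seq : ℕ → X := fun n => Nat.rec x next n with hseqdef
  have hseq_succ : ∀ n, seq (n+1) = next n (seq n) := fun n => rfl
  have hstep : ∀ n, f (seq (n+1)) + δ * dist (seq (n+1)) (seq n) ≤ f (seq n) := by
    intro n; rw [hseq_succ]; exact hnext1 n (seq n)
  have hstep2 : ∀ n, f (seq (n+1)) < sInf (f '' S (seq n)) + (1/2)^n := by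
    intro n; rw [hseq_succ]; exact hnext2 n (seq n)
  have hchain : ∀ n m, n ≤ m → f (seq m) + δ * dist (seq m) (seq n) ≤ f (seq n) := by
    intro n m hnm
    induction m with
    | zero => simp_all
    | succ m ih =>
      rcases Nat.lt_or_ge n (m+1) with h | h
      · have hnm' : n ≤ m := Nat.lt_succ_iff.mp h
        have h1 := hstep m
        have h2 := ih hnm'
        have htri : dist (seq (m+1)) (seq n) ≤ dist (seq (m+1)) (seq m) + dist (seq m) (seq n) :=
          dist_triangle _ _ _
        nlinarith [hδ.le]
      · have : n = m + 1 := le_antisymm hnm h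
        subst this; simp
  have hseq0 : seq 0 = x := rfl
  have hsum : ∀ n, δ * ∑ k ∈ Finset.range n, dist (seq k) (seq (k+1)) + f (seq n) ≤ f x := by
    intro n
    induction n with
    | zero => simp [hseq0]
    | succ n ih =>
      rw [Finset.sum_range_succ]
      have h1 := hstep n
      rw [dist_comm (seq (n+1)) (seq n)] at h1
      nlinarith
  have hsum' : ∀ n, ∑ k ∈ Finset.range n, dist (seq k) (seq (k+1)) ≤ f x / δ := by
    intro n
    have h1 := hsum n
    have h2 := hf0 (seq n)
    rw [le_div_iff₀ hδ]; nlinarith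
  have hsummable : Summable (fun n => dist (seq n) (seq (n+1))) :=
    summable_of_sum_range_le (fun n => dist_nonneg) hsum'
  have hcauchy : CauchySeq seq := cauchySeq_of_summable_dist hsummable
  obtain ⟨y, hy⟩ := cauchySeq_tendsto_of_complete hcauchy
  -- limit inequality: f y + δ * dist y (seq n) ≤ f (seq n)
  have hlim : ∀ n, f y + δ * dist y (seq n) ≤ f (seq n) := by
    intro n
    have htend : Tendsto (fun m => f (seq m) + δ * dist (seq m) (seq n)) atTop
        (𝓝 (f y + δ * dist y (seq n))) := by
      exact ((hf.tendsto y).comp hy).add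
        (((continuous_dist.comp (Continuous.prodMk continuous_id continuous_const)).tendsto y).comp hy |>.const_mul δ)
    refine le_of_tendsto htend ?_
    filter_upwards [eventually_ge_atTop n] with m hm using hchain n m hm
  refine ⟨y, ?_, ?_, ?_⟩
  · have h0 := hlim 0
    rw [hseq0] at h0
    have := hf0 y
    rw [le_div_iff₀ hδ]; nlinarith
  · have h0 := hlim 0
    rw [hseq0] at h0
    nlinarith [dist_nonneg (x := y) (y := x), hδ.le]
  · intro z
    by_contra hcon
    push_neg at hcon
    -- f z < f y - δ * dist z y
    have hzS : ∀ n, z ∈ S (seq n) := by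
      intro n
      have h1 := hlim n
      have htri : dist z (seq n) ≤ dist z y + dist y (seq n) := dist_triangle _ _ _
      simp only [hS, mem_setOf_eq]
      nlinarith
    have hmle : ∀ n, sInf (f '' S (seq n)) ≤ f z := by
      intro n; exact csInf_le (hbdd _) ⟨z, hzS n, rfl⟩
    have hfy_le : f y ≤ f z := by
      have htend : Tendsto (fun n => f (seq (n+1))) atTop (𝓝 (f y)) :=
        ((hf.tendsto y).comp hy).comp (tendsto_add_atTop_nat 1)
      have htend2 : Tendsto (fun n : ℕ => f z + (1/2:ℝ)^n) atTop (𝓝 (f z + 0)) :=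
        tendsto_const_nhds.add (tendsto_pow_atTop_nhds_zero_of_lt_one (by norm_num) (by norm_num))
      rw [add_zero] at htend2
      have hle : ∀ n, f (seq (n+1)) ≤ f z + (1/2:ℝ)^n := fun n =>
        le_trans (hstep2 n).le (by linarith [hmle n])
      exact le_of_tendsto_of_tendsto' htend htend2 hle
    have hd : 0 ≤ δ * dist z y := mul_nonneg hδ.le dist_nonneg
    linarith
open Set Filter Topology Real

/-- PL inequality implies quadratic growth. -/
theorem quadratic_growth_of_pl {d : ℕ} (q : EuclideanSpace ℝ (Fin d) → ℝ) (μ : ℝ)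
    (hμ : 0 < μ) (hq : ContDiff ℝ 1 q)
    (xstar : EuclideanSpace ℝ (Fin d))
    (hmin : ∀ x, q xstar ≤ q x)
    (huniq : ∀ y, (∀ x, q y ≤ q x) → y = xstar)
    (hpl : ∀ x, ‖gradient q x‖ ^ 2 ≥ 2 * μ * (q x - q xstar)) :
    ∀ x, q x - q xstar ≥ μ / 2 * ‖x - xstar‖ ^ 2 := by
  intro x
  set g : EuclideanSpace ℝ (Fin d) → ℝ := fun z => q z - q xstar with hgdef
  set f : EuclideanSpace ℝ (Fin d) → ℝ := fun z => Real.sqrt (g z) with hfdef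
  have hg0 : ∀ z, 0 ≤ g z := fun z => sub_nonneg.mpr (hmin z)
  have hf0 : ∀ z, 0 ≤ f z := fun z => Real.sqrt_nonneg _
  have hgc : Continuous g := (hq.continuous).sub continuous_const
  have hfc : Continuous f := Real.continuous_sqrt.comp hgc
  set s : ℝ := Real.sqrt (μ / 2) with hsdef
  have hs : 0 < s := Real.sqrt_pos.mpr (by linarith)
  -- key: for every 0 < c < s, c * ‖x - xstar‖ ≤ f x
  have hkey : ∀ c, 0 < c → c < s → c * ‖x - xstar‖ ≤ f x := by
    intro c hc hcs
    obtain ⟨y, hy1, hy2, hy3⟩ := my_ekeland f hfc hf0 c hc x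
    by_cases hfy : f y = 0
    · -- y is a minimizer, so y = xstar
      have hgy : g y = 0 := by
        have h1 : g y ≤ 0 := by
          by_contra hh
          push_neg at hh
          exact absurd hfy (ne_of_gt (Real.sqrt_pos.mpr hh))
        exact le_antisymm h1 (hg0 y)
      have hymin : ∀ x', q y ≤ q x' := by
        intro x'
        have : q y = q xstar := by simpa [hgdef, sub_eq_zero] using hgy
        rw [this]; exact hmin x'
      have hyx : y = xstar := huniq y hymin
      have : dist xstar x ≤ f x / c := by rw [← hyx]; exact hy1
      calc c * ‖x - xstar‖ = c * dist xstar x := by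
            rw [dist_comm, dist_eq_norm]
        _ ≤ c * (f x / c) := by
            exact mul_le_mul_of_nonneg_left this hc.le
        _ = f x := by field_simp
    · -- contradiction: the gradient norm bound fails
      exfalso
      have hfyp : 0 < f y := lt_of_le_of_ne (hf0 y) (Ne.symm hfy)
      have hgyp : 0 < g y := Real.sqrt_pos.mp hfyp
      have hqd : HasFDerivAt q (fderiv ℝ q y) y :=
        ((hq.differentiable one_ne_zero) y).hasFDerivAt
      have hgd : HasFDerivAt g (fderiv ℝ q y) y := hqd.sub_const _
      have hfd : HasFDerivAt f ((1 / (2 * Real.sqrt (g y))) • fderiv ℝ q y) y :=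
        hgd.sqrt (ne_of_gt hgyp)
      set D : EuclideanSpace ℝ (Fin d) →L[ℝ] ℝ :=
        (1 / (2 * Real.sqrt (g y))) • fderiv ℝ q y with hDdef
      -- Step 1: ‖D‖ ≤ c
      have hDv : ∀ v : EuclideanSpace ℝ (Fin d), -(c * ‖v‖) ≤ D v := by
        intro v
        have hline : HasDerivAt (fun t : ℝ => y + t • v) v 0 := by
          simpa using ((hasDerivAt_id (0:ℝ)).smul_const v).const_add y
        have hfd' : HasFDerivAt f D ((fun t : ℝ => y + t • v) 0) := by
          simpa using hfd
        have hcomp : HasDerivAt (fun t : ℝ => f (y + t • v)) (D v) 0 := by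
          have := hfd'.comp_hasDerivAt (0:ℝ) hline
          exact this
        have hslope := hasDerivAt_iff_tendsto_slope.mp hcomp
        have hslope' : Tendsto (slope (fun t : ℝ => f (y + t • v)) 0) (𝓝[>] 0) (𝓝 (D v)) :=
          hslope.mono_left (nhdsWithin_mono _ (fun t ht => ne_of_gt ht))
        refine ge_of_tendsto hslope' ?_
        filter_upwards [self_mem_nhdsWithin] with t ht
        have ht : (0:ℝ) < t := ht
        have hdist : dist (y + t • v) y = t * ‖v‖ := by
          rw [dist_eq_norm]
          simp [norm_smul, abs_of_pos ht]
        have h3 := hy3 (y + t • v)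
        rw [hdist] at h3
        rw [slope_def_field]
        simp only [zero_smul, add_zero, sub_zero]
        rw [le_div_iff₀ ht]
        nlinarith
      have hDnorm : ‖D‖ ≤ c := by
        refine D.opNorm_le_bound hc.le (fun v => ?_)
        rw [Real.norm_eq_abs, abs_le]
        constructor
        · linarith [hDv v]
        · have h := hDv (-v)
          simp only [norm_neg, map_neg] at h
          linarith
      -- Step 2: ‖D‖ ≥ s
      have hgrad : ‖gradient q y‖ = ‖fderiv ℝ q y‖ := by
        rw [gradient]; exact LinearIsometryEquiv.norm_map _ _
      have hpl' : ‖fderiv ℝ q y‖ ^ 2 ≥ 2 * μ * g y := by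
        rw [← hgrad]; exact hpl y
      have hDnorm_eq : ‖D‖ = ‖fderiv ℝ q y‖ / (2 * f y) := by
        have h1 : ‖D‖ = ‖(1 / (2 * Real.sqrt (g y)))‖ * ‖fderiv ℝ q y‖ :=
          norm_smul (β := EuclideanSpace ℝ (Fin d) →L[ℝ] ℝ) _ _
        rw [h1, Real.norm_eq_abs,
          abs_of_pos (by positivity : (0:ℝ) < 1 / (2 * Real.sqrt (g y)))]
        have h2 : f y = Real.sqrt (g y) := rfl
        rw [h2]
        field_simp
      have hfy_sq : f y ^ 2 = g y := Real.sq_sqrt (hg0 y)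
      have hD_sq : ‖D‖ ^ 2 ≥ μ / 2 := by
        rw [hDnorm_eq, div_pow]
        rw [ge_iff_le, le_div_iff₀ (by positivity)]
        have : (2 * f y) ^ 2 = 4 * g y := by rw [mul_pow]; rw [← hfy_sq]; ring
        rw [this]
        ring_nf
        ring_nf at hpl'
        linarith
      have : s ≤ ‖D‖ := by
        have h1 : s = Real.sqrt (μ/2) := rfl
        calc s = Real.sqrt (μ/2) := rfl
          _ ≤ Real.sqrt (‖D‖^2) := Real.sqrt_le_sqrt (by linarith)
          _ = ‖D‖ := Real.sqrt_sq (norm_nonneg _)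
      linarith
  -- conclude
  have hfin : s * ‖x - xstar‖ ≤ f x := by
    rcases eq_or_lt_of_le (norm_nonneg (x - xstar)) with h | h
    · rw [← h, mul_zero]; exact hf0 x
    · by_contra hcon
      push_neg at hcon
      have h1 : f x / ‖x - xstar‖ < s := by rwa [div_lt_iff₀ h]
      obtain ⟨c, hc1, hc2⟩ := exists_between h1
      have hc0 : 0 < c := lt_of_le_of_lt (by positivity) hc1
      have := hkey c hc0 hc2
      rw [div_lt_iff₀ h] at hc1
      linarith [mul_comm c ‖x - xstar‖]
  have : (s * ‖x - xstar‖)^2 ≤ f x ^ 2 := by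
    have h0 : 0 ≤ s * ‖x - xstar‖ := by positivity
    nlinarith
  rw [Real.sq_sqrt (hg0 x)] at this
  have hs2 : s ^ 2 = μ / 2 := Real.sq_sqrt (by linarith)
  calc q x - q xstar = g x := rfl
    _ ≥ (s * ‖x - xstar‖)^2 := this
    _ = μ / 2 * ‖x - xstar‖^2 := by rw [mul_pow, hs2]
end

section
/- Let σ, ρ, θ ∈ (0,1) with σ + ρ < θ. Suppose a nonnegative sequence (u_k) satisfies u_{k+1} ≤ (σ + ρ)u_k + aθ^k + b + η∑_{t=0}^{k−1} θ^{k−t} u_t for all k ≥ 0, with a, b, η ≥ 0 and θ(1 + η/(θ − σ − ρ)) ≤ 1. Then there exist constants D, B ≥ 0 (depending on u_0, a, b, η, σ, ρ, θ) such that u_k ≤ Dθ^k + B for all k ≥ 0. -/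
open Finset

/-- Abstract form of Theorem 2: linear gradient reduction. -/
theorem linear_gradient_reduction (σ ρ θ a b η : ℝ)
    (hσ : σ ∈ Set.Ioo (0:ℝ) 1) (hρ : ρ ∈ Set.Ioo (0:ℝ) 1) (hθ : θ ∈ Set.Ioo (0:ℝ) 1)
    (hσρθ : σ + ρ < θ) (ha : 0 ≤ a) (hb : 0 ≤ b) (hη : 0 ≤ η)
    (hcond : θ * (1 + η / (θ - σ - ρ)) ≤ 1)
    (u : ℕ → ℝ) (hu : ∀ k, 0 ≤ u k)
    (hrec : ∀ k, u (k + 1) ≤ (σ + ρ) * u k + a * θ ^ k + b +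
      η * ∑ t ∈ Finset.range k, θ ^ (k - t) * u t) :
    ∃ D B : ℝ, 0 ≤ D ∧ 0 ≤ B ∧ ∀ k, u k ≤ D * θ ^ k + B := by
  obtain ⟨hσ0, hσ1⟩ := hσ
  obtain ⟨hθ0, hθ1⟩ := hθ
  have hρ0 := hρ.1
  have hs0 : 0 < σ + ρ := by linarith
  have hd : 0 < θ - (σ + ρ) := by linarith
  have h1θ : 0 < 1 - θ := by linarith
  set D := a / (θ - (σ + ρ)) with hDdef
  have hD : 0 ≤ D := div_nonneg ha hd.le
  set M := θ / (1 - θ) with hMdef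
  have hM : 0 ≤ M := div_nonneg hθ0.le h1θ.le
  set B := u 0 + (b + η * D * M) / (1 - θ) with hBdef
  have hB : 0 ≤ B :=
    add_nonneg (hu 0) (div_nonneg (by positivity) h1θ.le)
  have hB1 : (1 - θ) * B = (1 - θ) * u 0 + (b + η * D * M) := by
    rw [hBdef]; field_simp
  have hηM : η * M ≤ θ - (σ + ρ) := by
    have h2 : θ * (η / (θ - σ - ρ)) ≤ 1 - θ := by linarith [hcond]
    have h3 : θ * η ≤ (1 - θ) * (θ - (σ + ρ)) := by
      have : θ * η / (θ - (σ + ρ)) ≤ 1 - θ := by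
        rw [mul_div_assoc]
        convert h2 using 3
        ring
      calc θ * η = θ * η / (θ - (σ + ρ)) * (θ - (σ + ρ)) := by field_simp
        _ ≤ (1 - θ) * (θ - (σ + ρ)) := by
            exact mul_le_mul_of_nonneg_right this hd.le
    rw [hMdef]
    rw [mul_div_assoc', div_le_iff₀ h1θ]
    nlinarith
  have hgsum : ∀ k, ∑ t ∈ range k, θ ^ (k - t) ≤ M := by
    intro k
    have hre : ∑ t ∈ range k, θ ^ (k - t) = ∑ t ∈ range k, θ ^ (t + 1) := by
      rw [← Finset.sum_range_reflect]
      apply Finset.sum_congr rfl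
      intro j hj
      rw [Finset.mem_range] at hj
      congr 1
      omega
    rw [hre]
    have h4 : ∑ t ∈ range k, θ ^ (t + 1) = θ * ∑ t ∈ range k, θ ^ t := by
      rw [Finset.mul_sum]
      apply Finset.sum_congr rfl
      intro t _
      rw [pow_succ]; ring
    rw [h4]
    have hg : ∑ t ∈ range k, θ ^ t ≤ 1 / (1 - θ) := by
      rw [geom_sum_eq (by linarith : θ ≠ 1)]
      have heq : (θ ^ k - 1) / (θ - 1) = (1 - θ ^ k) / (1 - θ) := by
        rw [div_eq_div_iff (by linarith) (by linarith)]; ring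
      rw [heq, div_le_div_iff₀ h1θ h1θ]
      have hpk : 0 ≤ θ ^ k := pow_nonneg hθ0.le k
      nlinarith
    calc θ * ∑ t ∈ range k, θ ^ t ≤ θ * (1 / (1 - θ)) :=
          mul_le_mul_of_nonneg_left hg hθ0.le
      _ = M := by rw [hMdef]; ring
  refine ⟨D, B, hD, hB, ?_⟩
  intro k
  induction k using Nat.strong_induction_on with
  | _ k ih =>
    match k with
    | 0 =>
      simp only [pow_zero, mul_one]
      have : 0 ≤ (b + η * D * M) / (1 - θ) := div_nonneg (by positivity) h1θ.le
      rw [hBdef]; linarith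
    | Nat.succ k =>
      have hsum : ∑ t ∈ range k, θ ^ (k - t) * u t ≤ (D + B) * M := by
        calc ∑ t ∈ range k, θ ^ (k - t) * u t
            ≤ ∑ t ∈ range k, (D + B) * θ ^ (k - t) := by
              apply Finset.sum_le_sum
              intro t ht
              rw [Finset.mem_range] at ht
              have h1 : u t ≤ D * θ ^ t + B := ih t (by omega)
              have hpn : (0:ℝ) ≤ θ ^ (k - t) := pow_nonneg hθ0.le _
              have h2 : θ ^ (k - t) * u t ≤ θ ^ (k - t) * (D * θ ^ t + B) :=
                mul_le_mul_of_nonneg_left h1 hpn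
              have h3 : θ ^ (k - t) * θ ^ t = θ ^ k := by
                rw [← pow_add]; congr 1; omega
              have h5 : θ ^ k ≤ θ ^ (k - t) :=
                pow_le_pow_of_le_one hθ0.le hθ1.le (by omega)
              nlinarith
          _ = (D + B) * ∑ t ∈ range k, θ ^ (k - t) := by rw [Finset.mul_sum]
          _ ≤ (D + B) * M := by
              apply mul_le_mul_of_nonneg_left (hgsum k) (by linarith)
      have huk : u k ≤ D * θ ^ k + B := ih k (by omega)
      have hDd : D * (θ - (σ + ρ)) = a := div_mul_cancel₀ a hd.ne'
      have hpk : (0:ℝ) ≤ θ ^ k := pow_nonneg hθ0.le k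
      have hstep := hrec k
      have hsum2 : η * ∑ t ∈ range k, θ ^ (k - t) * u t ≤ η * ((D + B) * M) :=
        mul_le_mul_of_nonneg_left hsum hη
    -- key constant inequality: (σ+ρ)*B + b + η*(D+B)*M ≤ B
      have hkey : (σ + ρ) * B + b + η * ((D + B) * M) ≤ B := by
        nlinarith [mul_le_mul_of_nonneg_right hηM hB, hu 0]
      have hpow : θ ^ (k + 1) = θ * θ ^ k := by rw [pow_succ]; ring
      calc u (k + 1) ≤ (σ + ρ) * u k + a * θ ^ k + b +
            η * ∑ t ∈ range k, θ ^ (k - t) * u t := hstep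
        _ ≤ (σ + ρ) * (D * θ ^ k + B) + a * θ ^ k + b + η * ((D + B) * M) := by
            have h6 := mul_le_mul_of_nonneg_left huk hs0.le
            linarith [hsum2]
        _ ≤ D * θ ^ (k + 1) + B := by
            rw [hpow]
            have heq2 : (σ + ρ) * (D * θ ^ k) + a * θ ^ k = D * (θ * θ ^ k) := by
              linear_combination (-θ ^ k) * hDd
            linarith [hkey]
end
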